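/- arXiv:1303.1064 — 2 statements merged into one kernel-verified Lean document; each statement's English description precedes it below -/
import Mathlib

section
/- Closed form of the terminal variance recursion: Define V_0 = 0 and V_{t+1} = s_t²(1−B_t) V_t + d_t for t = 0,…,T−1, where d_t = [1/∏_{k=t+1}^{T−1} s_k²(1−B_k)] · B_t / (4ω² ∏_{k=t}^{T−1}(1−B_k)) and each s_k ≠ 0, 0 < B_k < 1, ω > 0. Then V_T = (1 − ∏_{k=0}^{T−1}(1−B_k)) / (4ω² ∏_{k=0}^{T−1}(1−B_k)). -/
theorem terminal_variance_closed_form (T : ℕ) (hT : 0 < T) (ω : ℝ) (hω : 0 < ω)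
    (s B V : ℕ → ℝ) (hs : ∀ k < T, s k ≠ 0) (hB : ∀ k < T, 0 < B k ∧ B k < 1)
    (hV0 : V 0 = 0)
    (hVrec : ∀ t < T, V (t + 1) = s t ^ 2 * (1 - B t) * V t +
      (∏ k ∈ Finset.Ico (t + 1) T, s k ^ 2 * (1 - B k))⁻¹ *
        (B t / (4 * ω ^ 2 * ∏ k ∈ Finset.Ico t T, (1 - B k)))) :
    V T = (1 - ∏ k ∈ Finset.range T, (1 - B k)) /
      (4 * ω ^ 2 * ∏ k ∈ Finset.range T, (1 - B k)) := by
  set Q : ℕ → ℝ := fun t => ∏ k ∈ Finset.Ico t T, (1 - B k) with hQ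
  set P : ℕ → ℝ := fun t => ∏ k ∈ Finset.Ico t T, s k ^ 2 * (1 - B k) with hP
  have hQpos : ∀ t, 0 < Q t := by
    intro t
    apply Finset.prod_pos
    intro k hk
    have := (hB k (Finset.mem_Ico.mp hk).2).2
    linarith
  have hPne : ∀ t, P t ≠ 0 := by
    intro t
    apply Finset.prod_ne_zero_iff.mpr
    intro k hk
    have hk' := (Finset.mem_Ico.mp hk).2
    have h1 := hs k hk'
    have h2 := (hB k hk').2
    exact mul_ne_zero (pow_ne_zero 2 h1) (by linarith)
  have key : ∀ t ≤ T, P t * V t = ((Q 0)⁻¹ - (Q t)⁻¹) / (4 * ω ^ 2) := by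
    intro t
    induction t with
    | zero => intro _; simp [hV0]
    | succ n ih =>
      intro hn
      have hnT : n < T := hn
      have ihn := ih (le_of_lt hnT)
      have hQsplit : Q n = (1 - B n) * Q (n + 1) :=
        Finset.prod_eq_prod_Ico_succ_bot hnT _
      have hPsplit : P n = s n ^ 2 * (1 - B n) * P (n + 1) :=
        Finset.prod_eq_prod_Ico_succ_bot hnT _
      have hrec : V (n + 1) = s n ^ 2 * (1 - B n) * V n +
          (P (n + 1))⁻¹ * (B n / (4 * ω ^ 2 * Q n)) := hVrec n hnT
      have hPn1 := hPne (n + 1)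
      have hQn1 := (hQpos (n + 1)).ne'
      have hBn := hB n hnT
      have h1B : (1 : ℝ) - B n ≠ 0 := by linarith [hBn.2]
      have hωne : ω ≠ 0 := hω.ne'
      have hfirst : P (n + 1) * (s n ^ 2 * (1 - B n) * V n) = P n * V n := by
        rw [hPsplit]; ring
      have hstep : P (n + 1) * V (n + 1) = P n * V n + B n / (4 * ω ^ 2 * Q n) := by
        rw [hrec, mul_add, hfirst, ← mul_assoc, mul_inv_cancel₀ hPn1, one_mul]
      rw [hstep, ihn, hQsplit]
      field_simp
      ring
  have hT' := key T le_rfl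
  have hQT : Q T = 1 := by
    show (∏ k ∈ Finset.Ico T T, (1 - B k)) = 1
    simp
  have hPT : P T = 1 := by
    show (∏ k ∈ Finset.Ico T T, s k ^ 2 * (1 - B k)) = 1
    simp
  have hQ0 : (∏ k ∈ Finset.range T, (1 - B k)) = Q 0 := by
    rw [Finset.range_eq_Ico]
  rw [hPT, hQT, one_mul] at hT'
  rw [hT', hQ0]
  have hQ0ne := (hQpos 0).ne'
  have hωne : ω ≠ 0 := hω.ne'
  field_simp
end

section
/- Efficient frontier of the multi-period mean-variance problem: With E(x_T) = x_0 ∏_{k=0}^{T−1} s_k + (1/(2ω)) · (1 − ∏(1−B_k))/∏(1−B_k) and Var(x_T) = (1 − ∏(1−B_k))/(4ω² ∏(1−B_k)) (products over k = 0,…,T−1), eliminating ω > 0 yields Var(x_T) = [∏_{k=0}^{T−1}(1−B_k) / (1 − ∏_{k=0}^{T−1}(1−B_k))] · (E(x_T) − x_0 ∏_{k=0}^{T−1} s_k)², valid for E(x_T) > x_0 ∏_{k=0}^{T−1} s_k. -/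
/-!
Write `P = ∏ (1 - B k)` and `c = (1 - P) / P`. The mean exceeds `x₀ ∏ s_k` by `c / (2ω)`
and the variance is `c / (4ω²) = (c / (2ω))² / c`, which eliminates `ω`. Since `T > 0` and
every `1 - B k` lies in `(0, 1)`, also `P ∈ (0, 1)`, so `c > 0` and the excess is positive.
-/

open Finset

lemma Finset.prod_mem_Ioo_zero_one {ι R : Type*} [CommSemiring R] [PartialOrder R]
    [IsStrictOrderedRing R] {s : Finset ι} {f : ι → R} (hs : s.Nonempty)
    (hf : ∀ i ∈ s, 0 < f i ∧ f i < 1) : 0 < ∏ i ∈ s, f i ∧ ∏ i ∈ s, f i < 1 := by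
  refine ⟨prod_pos fun i hi => (hf i hi).1, ?_⟩
  simpa using prod_lt_prod_of_nonempty (g := 1) (fun i hi => (hf i hi).1)
    (fun i hi => (hf i hi).2) hs

lemma excess_mean_pos {P ω : ℝ} (hP₀ : 0 < P) (hP₁ : P < 1) (hω : 0 < ω) :
    0 < 1 / (2 * ω) * ((1 - P) / P) := by
  have : 0 < 1 - P := sub_pos.mpr hP₁
  positivity

lemma variance_eq_of_excess_mean {P ω : ℝ} (hP₀ : P ≠ 0) (hP₁ : P ≠ 1) (hω : ω ≠ 0) :
    (1 - P) / (4 * ω ^ 2 * P) = P / (1 - P) * (1 / (2 * ω) * ((1 - P) / P)) ^ 2 := by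
  have : 1 - P ≠ 0 := sub_ne_zero.mpr hP₁.symm
  field_simp
  ring

theorem efficient_frontier_general (T : ℕ) (hT : 0 < T) (x0 ω : ℝ) (hω : 0 < ω)
    (s B : ℕ → ℝ) (hB : ∀ k < T, 0 < B k ∧ B k < 1)
    (E V : ℝ)
    (hE : E = x0 * ∏ k ∈ Finset.range T, s k +
      (1 / (2 * ω)) * ((1 - ∏ k ∈ Finset.range T, (1 - B k)) /
        ∏ k ∈ Finset.range T, (1 - B k)))
    (hV : V = (1 - ∏ k ∈ Finset.range T, (1 - B k)) /
      (4 * ω ^ 2 * ∏ k ∈ Finset.range T, (1 - B k))) :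
    V = ((∏ k ∈ Finset.range T, (1 - B k)) /
        (1 - ∏ k ∈ Finset.range T, (1 - B k))) *
        (E - x0 * ∏ k ∈ Finset.range T, s k) ^ 2 ∧
      E > x0 * ∏ k ∈ Finset.range T, s k := by
  obtain ⟨hP₀, hP₁⟩ :
      0 < ∏ k ∈ range T, (1 - B k) ∧ ∏ k ∈ range T, (1 - B k) < 1 :=
    prod_mem_Ioo_zero_one (nonempty_range_iff.mpr hT.ne') fun k hk => by
      obtain ⟨hB₀, hB₁⟩ := hB k (mem_range.mp hk)
      constructor <;> linarith
  subst hE hV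
  constructor
  · rw [add_sub_cancel_left]
    exact variance_eq_of_excess_mean hP₀.ne' hP₁.ne hω.ne'
  · linarith [excess_mean_pos hP₀ hP₁ hω]

theorem efficient_frontier (T : ℕ) (hT : 0 < T) (x0 ω : ℝ) (hω : 0 < ω)
    (s B : ℕ → ℝ) (hs : ∀ k < T, s k ≠ 0) (hB : ∀ k < T, 0 < B k ∧ B k < 1)
    (E V : ℝ)
    (hE : E = x0 * ∏ k ∈ Finset.range T, s k +
      (1 / (2 * ω)) * ((1 - ∏ k ∈ Finset.range T, (1 - B k)) /
        ∏ k ∈ Finset.range T, (1 - B k)))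
    (hV : V = (1 - ∏ k ∈ Finset.range T, (1 - B k)) /
      (4 * ω ^ 2 * ∏ k ∈ Finset.range T, (1 - B k))) :
    V = ((∏ k ∈ Finset.range T, (1 - B k)) /
        (1 - ∏ k ∈ Finset.range T, (1 - B k))) *
        (E - x0 * ∏ k ∈ Finset.range T, s k) ^ 2 ∧
      E > x0 * ∏ k ∈ Finset.range T, s k :=
  efficient_frontier_general T hT x0 ω hω s B hB E V hE hV
end
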